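/- arXiv:2510.03373 — 2 statements merged into one kernel-verified Lean document; each statement's English description precedes it below -/
import Mathlib

section
/- Let P be a Perron system and let 𝔓⁻ be the associated family of unions of consecutive P⁻-cylinders. Then every set U = (x₁, x₂) \ IS^{P⁻} with 0 ≤ x₁ < x₂ ≤ 1 can be covered by at most three sets from 𝔓⁻, each of diameter at most x₂ − x₁. -/
open Set Filter MeasureTheory
open scoped ENNReal

noncomputable section

/-- A Perron system `P = (φ_n)`: `φ₀ = φ []` and `φ_n(c₁,…,c_n) = φ [c₁,…,c_n]`;
all values are positive integers. -/
structure PerronSystem where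
  φ : List ℕ → ℕ
  φ_pos : ∀ l, 0 < φ l

/-- `(c₁−1)c₁⋯(c_n−1)c_n` (0-based indexing: `c 0 = c₁`). -/
def qprod (c : ℕ → ℕ) (n : ℕ) : ℝ :=
  ∏ i ∈ Finset.range n, (((c i : ℝ) - 1) * (c i : ℝ))

namespace PerronSystem

variable (P : PerronSystem)

/-- `r P c 0 = φ₀` and `r P c n = φ_n(c₁,…,c_n)`. -/
def r (c : ℕ → ℕ) (n : ℕ) : ℕ := P.φ (List.ofFn fun j : Fin n => c j)

/-- The word `c₁ … c_k` is P-admissible: `c_i ≥ φ_{i−1}(c₁,…,c_{i−1}) + 1`. -/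
def AdmissibleUpTo (c : ℕ → ℕ) (k : ℕ) : Prop := ∀ i < k, P.r c i + 1 ≤ c i

/-- The infinite digit sequence `c` is P-admissible. -/
def Admissible (c : ℕ → ℕ) : Prop := ∀ i, P.r c i + 1 ≤ c i

/-- `r₀ r₁ ⋯ r_{n−1}`. -/
def rprod (c : ℕ → ℕ) (n : ℕ) : ℝ := ∏ i ∈ Finset.range n, (P.r c i : ℝ)

/-- Diameter `D_k = r₀⋯r_{k−1} / ((c₁−1)c₁⋯(c_k−1)c_k)` of the cylinder with base `c₁…c_k`. -/
def D (c : ℕ → ℕ) (k : ℕ) : ℝ := P.rprod c k / qprod c k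

/-- `S_k`, the infimum of the positive Perron cylinder with base `c₁…c_k`. -/
def S (c : ℕ → ℕ) (k : ℕ) : ℝ :=
  ∑ n ∈ Finset.range k, P.rprod c (n + 1) / (qprod c n * (c n : ℝ))

/-- The positive Perron cylinder `Δ^P_{c₁…c_k} = (S_k, S_k + D_k]`. -/
def cyl (c : ℕ → ℕ) (k : ℕ) : Set ℝ := Ioc (P.S c k) (P.S c k + P.D c k)

/-- `A_k = ∑_{n=0}^{k−1} (−1)^n r₀⋯r_n / ((c₁−1)c₁⋯(c_n−1)c_n (c_{n+1}−1))`. -/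
def A (c : ℕ → ℕ) (k : ℕ) : ℝ :=
  ∑ n ∈ Finset.range k, (-1 : ℝ) ^ n * P.rprod c (n + 1) / (qprod c n * ((c n : ℝ) - 1))

/-- The second endpoint `A_k + (−1)^k D_k` of the interval `I_{c₁…c_k}`. -/
def altEnd (c : ℕ → ℕ) (k : ℕ) : ℝ := P.A c k + (-1 : ℝ) ^ k * P.D c k

/-- The countable set `IS^{P⁻}` of endpoints of the intervals `I_{c₁…c_k}`
(the word of length `0` contributes the endpoints `0` and `1`). -/
def IS : Set ℝ :=
  {x | ∃ (c : ℕ → ℕ) (k : ℕ), P.AdmissibleUpTo c k ∧ (x = P.A c k ∨ x = P.altEnd c k)}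

/-- The alternating Perron cylinder `Δ^{P⁻}_{c₁…c_k} = I_{c₁…c_k} \ IS^{P⁻}`. -/
def altCyl (c : ℕ → ℕ) (k : ℕ) : Set ℝ :=
  Ioo (min (P.A c k) (P.altEnd c k)) (max (P.A c k) (P.altEnd c k)) \ P.IS

/-- The family `𝔓` of all unions of consecutive positive Perron cylinders of the same
rank contained in a single cylinder of the previous rank. -/
def famP : Set (Set ℝ) :=
  {U | ∃ (c : ℕ → ℕ) (k n : ℕ), P.AdmissibleUpTo c k ∧ P.r c k + 1 ≤ n ∧
      ((∃ m, n ≤ m ∧ U = ⋃ i ∈ Finset.Icc n m, P.cyl (Function.update c k i) (k + 1)) ∨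
        U = ⋃ i ∈ {j : ℕ | n ≤ j}, P.cyl (Function.update c k i) (k + 1))}

/-- The subfamily `𝔓₁ ⊆ 𝔓` of finite unions. -/
def famP1 : Set (Set ℝ) :=
  {U | ∃ (c : ℕ → ℕ) (k n m : ℕ), P.AdmissibleUpTo c k ∧ P.r c k + 1 ≤ n ∧ n ≤ m ∧
      U = ⋃ i ∈ Finset.Icc n m, P.cyl (Function.update c k i) (k + 1)}

/-- The family `𝔓⁻` of all unions of consecutive alternating Perron cylinders of the same
rank contained in a single cylinder of the previous rank. -/
def famAlt : Set (Set ℝ) :=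
  {U | ∃ (c : ℕ → ℕ) (k n : ℕ), P.AdmissibleUpTo c k ∧ P.r c k + 1 ≤ n ∧
      ((∃ m, n ≤ m ∧ U = ⋃ i ∈ Finset.Icc n m, P.altCyl (Function.update c k i) (k + 1)) ∨
        U = ⋃ i ∈ {j : ℕ | n ≤ j}, P.altCyl (Function.update c k i) (k + 1))}

/-- The subfamily `𝔓₁⁻ ⊆ 𝔓⁻` of finite unions. -/
def famAlt1 : Set (Set ℝ) :=
  {U | ∃ (c : ℕ → ℕ) (k n m : ℕ), P.AdmissibleUpTo c k ∧ P.r c k + 1 ≤ n ∧ n ≤ m ∧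
      U = ⋃ i ∈ Finset.Icc n m, P.altCyl (Function.update c k i) (k + 1)}

/-- The value `Δ^P_c` of the positive Perron expansion with digit sequence `c`. -/
def posValue (c : ℕ → ℕ) : ℝ :=
  ∑' n : ℕ, P.rprod c (n + 1) / (qprod c n * (c n : ℝ))

/-- The value `Δ^{P⁻}_c` of the alternating Perron expansion with digit sequence `c`. -/
def altValue (c : ℕ → ℕ) : ℝ :=
  ∑' n : ℕ, (-1 : ℝ) ^ n * P.rprod c (n + 1) / (qprod c n * ((c n : ℝ) - 1))

end PerronSystem

/-- The Hausdorff `α`-dimensional measure of `E` with respect to a family of coverings `Φ`. -/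
def Hfam (Φ : Set (Set ℝ)) (α : ℝ) (E : Set ℝ) : ℝ≥0∞ :=
  ⨆ (ε : ℝ) (_ : 0 < ε),
    ⨅ (f : ℕ → Set ℝ) (_ : E ⊆ ⋃ n, f n) (_ : ∀ n, f n ∈ Φ)
      (_ : ∀ n, EMetric.diam (f n) ≤ ENNReal.ofReal ε),
      ∑' n : ℕ, EMetric.diam (f n) ^ α

/-- The Hausdorff dimension of `E` with respect to a family of coverings `Φ`:
`inf {α > 0 : H^α(E, Φ) = 0}` (equal to `∞` if no such `α` exists). -/
def dimFam (Φ : Set (Set ℝ)) (E : Set ℝ) : ℝ≥0∞ :=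
  ⨅ (α : ℝ) (_ : 0 < α) (_ : Hfam Φ α E = 0), ENNReal.ofReal α

end

/-!
Measure positions in a cylinder `I_{c₁…c_k}` by the signed distance from `A_k`, so that the
cylinder becomes `(0, D_k)`. Its children `I_{c₁…c_k (j+1)}`, `j ≥ r_k`, are the intervals
`(R/(j+1), R/j)` with `R = r_k D_k`, accumulating at `0`; in a child's own coordinate the
orientation is reversed. The division points `R/j` all lie in `IS^{P⁻}`, so a band `(a, b)` (in
coordinates, minus `IS^{P⁻}`) splits at them, and up to `IS^{P⁻}` the members of `𝔓⁻` inside the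
cylinder are the bands `(R/(m+1), R/n)` and `(0, R/n)`.

A band `(a, b) ⊆ [0, D_k]` either lies in the closure of one child, where we recurse (`D` at least
halves), or contains division points `R/(j+1) > ⋯ > R/(m+1)`. The part between them is one finite
union, and the two remaining pieces lie at the `0`-end of child `m+2` and at the `D`-end of child
`j+1`. A piece `(0, x)` is covered by the tail of children starting with the one containing `x`,
overshooting by one child width `≤ min(x, D/2)`. A piece at the `D`-end is covered by a finite
union of children, or lies in the extreme child `r_k + 1` and becomes a piece at its `0`-end.
Splitting off the child that contains the inner endpoint gives covers by two sets without
overshoot; with a single division point the shorter side gets one set and the longer side two.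
-/

lemma exists_div_succ_lt_le {R x : ℝ} {n : ℕ} (hx : 0 < x) (hxn : x ≤ R / n) :
    ∃ j, n ≤ j ∧ R / ((j + 1 : ℕ) : ℝ) < x ∧ x ≤ R / j := by
  have hn : (0 : ℝ) < n :=
    Nat.cast_pos.2 <| Nat.pos_of_ne_zero fun h => by simp [h] at hxn; linarith
  have hnR : (n : ℝ) ≤ R / x := by rw [le_div_iff₀ hx, mul_comm, ← le_div_iff₀ hn]; exact hxn
  have hj : n ≤ ⌊R / x⌋₊ := Nat.le_floor hnR
  have hj₀ : (0 : ℝ) < ⌊R / x⌋₊ := hn.trans_le (by exact_mod_cast hj)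
  refine ⟨⌊R / x⌋₊, hj, ?_, ?_⟩
  · rw [div_lt_iff₀ (by positivity), Nat.cast_succ, mul_comm, ← div_lt_iff₀ hx]
    exact Nat.lt_floor_add_one _
  · rw [le_div_iff₀ hj₀, mul_comm, ← le_div_iff₀ hx]
    exact Nat.floor_le (hn.le.trans hnR)

lemma exists_div_succ_le_lt {R x : ℝ} {n : ℕ} (hx : 0 < x) (hxn : x < R / n) :
    ∃ j, n ≤ j ∧ R / ((j + 1 : ℕ) : ℝ) ≤ x ∧ x < R / j := by
  have hn : (0 : ℝ) < n :=
    Nat.cast_pos.2 <| Nat.pos_of_ne_zero fun h => by simp [h] at hxn; linarith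
  have hnR : (n : ℝ) < R / x := by rw [lt_div_iff₀ hx, mul_comm, ← lt_div_iff₀ hn]; exact hxn
  obtain ⟨j, hj⟩ : ∃ j, ⌈R / x⌉₊ = j + 1 :=
    ⟨_, (Nat.succ_pred_eq_of_pos ((Nat.zero_le n).trans_lt (Nat.lt_ceil.2 hnR))).symm⟩
  have hnj : n ≤ j := by have := Nat.lt_ceil.2 hnR; omega
  have hj₀ : (0 : ℝ) < j := hn.trans_le (by exact_mod_cast hnj)
  refine ⟨j, hnj, ?_, ?_⟩
  · rw [div_le_iff₀ (by positivity), mul_comm, ← div_le_iff₀ hx, ← hj]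
    exact Nat.le_ceil _
  · have hRx := Nat.ceil_lt_add_one (hn.le.trans hnR.le)
    rw [hj, Nat.cast_succ, add_lt_add_iff_right] at hRx
    rw [lt_div_iff₀ hj₀, mul_comm, ← lt_div_iff₀ hx]
    exact hRx

namespace PerronSystem

variable (P : PerronSystem)

/-- Maps `I_{c₁…c_k}` onto `(0, D_k)`, with `A_k` going to `0`. -/
noncomputable def coord (c : ℕ → ℕ) (k : ℕ) (y : ℝ) : ℝ := (-1) ^ k * (y - P.A c k)

noncomputable def scale (c : ℕ → ℕ) (k : ℕ) : ℝ := P.rprod c (k + 1) / qprod c k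

/-- In `coord c k`, the child `I_{c₁…c_k (j+1)}` is `(edge (j+1), edge j)` (for `j ≥ r_k`). -/
noncomputable def edge (c : ℕ → ℕ) (k j : ℕ) : ℝ := P.scale c k / j

noncomputable def band (c : ℕ → ℕ) (k : ℕ) (α β : ℝ) : Set ℝ :=
  P.coord c k ⁻¹' Ioo α β \ P.IS

def CoveredBy (n : ℕ) (S : Set ℝ) (d : ℝ) : Prop :=
  ∃ U : Fin n → Set ℝ, (∀ i, U i ∈ P.famAlt) ∧ S ⊆ ⋃ i, U i ∧
    ∀ i, Metric.ediam (U i) ≤ ENNReal.ofReal d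

section Edge

variable (c : ℕ → ℕ) (k : ℕ)

lemma one_le_r (n : ℕ) : 1 ≤ P.r c n := P.φ_pos _

lemma scale_nonneg : 0 ≤ P.scale c k := by
  refine div_nonneg (Finset.prod_nonneg fun _ _ => Nat.cast_nonneg _)
    (Finset.prod_nonneg fun i _ => ?_)
  rcases Nat.eq_zero_or_pos (c i) with h | h
  · simp [h]
  · exact mul_nonneg (sub_nonneg.2 (by exact_mod_cast h)) (Nat.cast_nonneg _)

lemma edge_nonneg (j : ℕ) : 0 ≤ P.edge c k j :=
  div_nonneg (P.scale_nonneg c k) (Nat.cast_nonneg j)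

lemma D_eq_edge : P.D c k = P.edge c k (P.r c k) := by
  have hr : (P.r c k : ℝ) ≠ 0 := by exact_mod_cast (P.φ_pos _).ne'
  rw [D, edge, scale, rprod, rprod, Finset.prod_range_succ, mul_div_right_comm,
    mul_div_cancel_right₀ _ hr]

lemma edge_antitone {i j : ℕ} (hi : 1 ≤ i) (hij : i ≤ j) : P.edge c k j ≤ P.edge c k i :=
  div_le_div_of_nonneg_left (P.scale_nonneg c k) (by exact_mod_cast hi) (by exact_mod_cast hij)

lemma edge_sub_edge_succ {j : ℕ} (hj : j ≠ 0) :
    P.edge c k j - P.edge c k (j + 1) = P.scale c k / (j * (j + 1)) := by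
  have : (j : ℝ) ≠ 0 := by exact_mod_cast hj
  simp only [edge]
  push_cast
  field_simp
  ring

lemma edge_sub_edge_succ_le_edge_succ {j : ℕ} (hj : 1 ≤ j) :
    P.edge c k j - P.edge c k (j + 1) ≤ P.edge c k (j + 1) := by
  have : (1 : ℝ) ≤ j := by exact_mod_cast hj
  rw [P.edge_sub_edge_succ c k (by omega), edge]
  push_cast
  exact div_le_div_of_nonneg_left (P.scale_nonneg c k) (by positivity) (by nlinarith)

lemma edge_succ_sub_edge_add_two_le {j : ℕ} (hj : 1 ≤ j) :
    P.edge c k (j + 1) - P.edge c k (j + 2) ≤ P.edge c k j - P.edge c k (j + 1) := by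
  have : (1 : ℝ) ≤ j := by exact_mod_cast hj
  rw [P.edge_sub_edge_succ c k (by omega), P.edge_sub_edge_succ c k (by omega)]
  push_cast
  exact div_le_div_of_nonneg_left (P.scale_nonneg c k) (by positivity) (by nlinarith)

lemma edge_sub_edge_succ_le_edge_sub {i j : ℕ} (hi : 1 ≤ i) (hij : i < j) :
    P.edge c k j - P.edge c k (j + 1) ≤ P.edge c k i - P.edge c k j := by
  obtain ⟨j, rfl⟩ : ∃ j', j = j' + 1 := ⟨j - 1, by omega⟩
  linarith [P.edge_succ_sub_edge_add_two_le c k (hi.trans (Nat.lt_succ_iff.1 hij)),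
    P.edge_antitone c k hi (Nat.lt_succ_iff.1 hij)]

lemma edge_sub_edge_succ_le_edge_div_two {i j : ℕ} (hi : 1 ≤ i) (hij : i ≤ j) :
    P.edge c k j - P.edge c k (j + 1) ≤ P.edge c k i / 2 := by
  have : (1 : ℝ) ≤ i := by exact_mod_cast hi
  have : (i : ℝ) ≤ j := by exact_mod_cast hij
  rw [P.edge_sub_edge_succ c k (by omega), edge, div_div]
  exact div_le_div_of_nonneg_left (P.scale_nonneg c k) (by positivity) (by nlinarith)

lemma edge_sub_edge_succ_le_edge_div_four {i j : ℕ} (hi : 1 ≤ i) (hij : i < j) :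
    P.edge c k j - P.edge c k (j + 1) ≤ P.edge c k i / 4 := by
  have : (1 : ℝ) ≤ i := by exact_mod_cast hi
  have : (i : ℝ) + 1 ≤ j := by exact_mod_cast hij
  rw [P.edge_sub_edge_succ c k (by omega), edge, div_div]
  exact div_le_div_of_nonneg_left (P.scale_nonneg c k) (by positivity) (by nlinarith)

lemma edge_sub_edge_succ_le_four_mul {j : ℕ} (hj : 1 ≤ j) :
    P.edge c k j - P.edge c k (j + 1) ≤ 4 * (P.edge c k (j + 1) - P.edge c k (j + 2)) := by
  have : (1 : ℝ) ≤ j := by exact_mod_cast hj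
  rw [P.edge_sub_edge_succ c k (by omega), P.edge_sub_edge_succ c k (by omega), mul_div_assoc',
    div_le_div_iff₀ (by positivity) (by positivity)]
  push_cast
  nlinarith [mul_nonneg (P.scale_nonneg c k) (by nlinarith : (0 : ℝ) ≤ 3 * j ^ 2 + j - 2)]

lemma exists_edge_succ_lt_le {x : ℝ} {n : ℕ} (hx : 0 < x) (hxn : x ≤ P.edge c k n) :
    ∃ j, n ≤ j ∧ P.edge c k (j + 1) < x ∧ x ≤ P.edge c k j :=
  exists_div_succ_lt_le hx hxn

lemma exists_edge_succ_le_lt {x : ℝ} {n : ℕ} (hx : 0 < x) (hxn : x < P.edge c k n) :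
    ∃ j, n ≤ j ∧ P.edge c k (j + 1) ≤ x ∧ x < P.edge c k j :=
  exists_div_succ_le_lt hx hxn

end Edge

variable {P} {c : ℕ → ℕ} {k : ℕ}

lemma AdmissibleUpTo.D_pos (hadm : P.AdmissibleUpTo c k) : 0 < P.D c k := by
  refine div_pos (Finset.prod_pos fun _ _ => Nat.cast_pos.2 (P.φ_pos _))
    (Finset.prod_pos fun i hi => ?_)
  have : (2 : ℝ) ≤ c i := by
    exact_mod_cast (Nat.succ_le_succ (P.one_le_r c i)).trans (hadm i (Finset.mem_range.1 hi))
  nlinarith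

lemma coord_eq_iff {y t : ℝ} : P.coord c k y = t ↔ y = P.A c k + (-1) ^ k * t := by
  have hs : ((-1 : ℝ) ^ k) * (-1) ^ k = 1 := by rw [← mul_pow]; norm_num
  unfold coord
  constructor
  · rintro rfl
    linear_combination (-(y - P.A c k)) * hs
  · rintro rfl
    simp only [add_sub_cancel_left, ← mul_assoc, hs, one_mul]

lemma isometry_coord : Isometry (P.coord c k) :=
  Isometry.of_dist_eq fun x y => by
    simp only [coord, Real.dist_eq, ← mul_sub, abs_mul, abs_neg_one_pow, one_mul,
      sub_sub_sub_cancel_right]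

lemma ediam_le_of_subset_coord_preimage {U : Set ℝ} {α β : ℝ}
    (hU : U ⊆ P.coord c k ⁻¹' Icc α β) : Metric.ediam U ≤ ENNReal.ofReal (β - α) := by
  rw [← isometry_coord.ediam_image, ← Real.ediam_Icc]
  exact Metric.ediam_mono (image_subset_iff.2 hU)

lemma coord_preimage_Ioo {u v : ℝ} (huv : u ≤ v) :
    P.coord c k ⁻¹' Ioo u v = Ioo (min (P.A c k + (-1) ^ k * u) (P.A c k + (-1) ^ k * v))
      (max (P.A c k + (-1) ^ k * u) (P.A c k + (-1) ^ k * v)) := by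
  ext y
  simp only [mem_preimage, mem_Ioo, coord]
  rcases neg_one_pow_eq_or ℝ k with h | h <;> rw [h]
  · rw [min_eq_left (by linarith), max_eq_right (by linarith)]
    constructor <;> rintro ⟨h₁, h₂⟩ <;> constructor <;> linarith
  · rw [min_eq_right (by linarith), max_eq_left (by linarith)]
    constructor <;> rintro ⟨h₁, h₂⟩ <;> constructor <;> linarith

lemma band_mono {α β α' β' : ℝ} (hα : α' ≤ α) (hβ : β ≤ β') :
    P.band c k α β ⊆ P.band c k α' β' :=
  sdiff_subset_sdiff_left (preimage_mono (Ioo_subset_Ioo hα hβ))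

lemma r_update {i j : ℕ} (hj : j ≤ k) : P.r (Function.update c k i) j = P.r c j := by
  simp only [r]
  congr 1
  exact List.ofFn_inj.2 (funext fun t => Function.update_of_ne (by omega) _ _)

lemma rprod_update {i n : ℕ} (hn : n ≤ k + 1) :
    P.rprod (Function.update c k i) n = P.rprod c n :=
  Finset.prod_congr rfl fun t ht => by rw [r_update (by simp at ht; omega)]

lemma qprod_update {i n : ℕ} (hn : n ≤ k) : qprod (Function.update c k i) n = qprod c n :=
  Finset.prod_congr rfl fun t ht => by rw [Function.update_of_ne (by simp at ht; omega)]

lemma AdmissibleUpTo.update (hadm : P.AdmissibleUpTo c k) {i : ℕ} (hi : P.r c k + 1 ≤ i) :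
    P.AdmissibleUpTo (Function.update c k i) (k + 1) := by
  intro j hj
  rcases (Nat.lt_succ_iff.1 hj).lt_or_eq with hj | rfl
  · rw [r_update hj.le, Function.update_of_ne hj.ne]
    exact hadm j hj
  · rwa [r_update le_rfl, Function.update_self]

lemma A_update (j : ℕ) :
    P.A (Function.update c k (j + 1)) (k + 1) = P.A c k + (-1) ^ k * P.edge c k j := by
  rw [A, Finset.sum_range_succ, rprod_update le_rfl, qprod_update le_rfl, Function.update_self]
  congr 1
  · refine Finset.sum_congr rfl fun n hn => ?_
    have hn := Finset.mem_range.1 hn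
    rw [rprod_update (by omega), qprod_update hn.le, Function.update_of_ne hn.ne]
  · rw [edge, scale]
    push_cast
    rw [add_sub_cancel_right, mul_div_assoc, div_div]

lemma D_update {j : ℕ} (hj : j ≠ 0) :
    P.D (Function.update c k (j + 1)) (k + 1) = P.edge c k j - P.edge c k (j + 1) := by
  rw [P.edge_sub_edge_succ c k hj, D, rprod_update le_rfl, qprod, Finset.prod_range_succ,
    Function.update_self, ← qprod, qprod_update le_rfl, scale, div_div]
  push_cast
  ring_nf

lemma altEnd_update {j : ℕ} (hj : j ≠ 0) :
    P.altEnd (Function.update c k (j + 1)) (k + 1) =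
      P.A c k + (-1) ^ k * P.edge c k (j + 1) := by
  rw [altEnd, A_update, D_update hj, pow_succ]
  ring

lemma coord_update (j : ℕ) (y : ℝ) :
    P.coord (Function.update c k (j + 1)) (k + 1) y = P.edge c k j - P.coord c k y := by
  have hs : ((-1 : ℝ) ^ k) * (-1) ^ k = 1 := by rw [← mul_pow]; norm_num
  rw [coord, coord, A_update, pow_succ]
  linear_combination P.edge c k j * hs

lemma AdmissibleUpTo.mem_IS_of_coord_eq_edge (hadm : P.AdmissibleUpTo c k) {j : ℕ}
    (hj : P.r c k ≤ j) {y : ℝ} (hy : P.coord c k y = P.edge c k j) : y ∈ P.IS := by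
  rw [coord_eq_iff] at hy
  subst hy
  rcases hj.eq_or_lt with rfl | hj
  · exact ⟨c, k, hadm, Or.inr (by rw [altEnd, D_eq_edge])⟩
  · obtain ⟨i, rfl⟩ : ∃ i, j = i + 1 := ⟨j - 1, by omega⟩
    have := P.one_le_r c k
    exact ⟨_, _, hadm.update (by omega), Or.inr (altEnd_update (by omega)).symm⟩

lemma altCyl_update {j : ℕ} (hj : j ≠ 0) :
    P.altCyl (Function.update c k (j + 1)) (k + 1) =
      P.band c k (P.edge c k (j + 1)) (P.edge c k j) := by
  rw [altCyl, A_update, altEnd_update hj, band,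
    coord_preimage_Ioo (P.edge_antitone c k (by omega) (Nat.le_succ j)), min_comm, max_comm]

lemma band_eq_band_update (j : ℕ) (α β : ℝ) :
    P.band c k α β = P.band (Function.update c k (j + 1)) (k + 1)
      (P.edge c k j - β) (P.edge c k j - α) := by
  ext y
  simp only [band, Set.mem_sdiff, mem_preimage, mem_Ioo, coord_update]
  constructor <;> rintro ⟨⟨h₁, h₂⟩, h⟩ <;> exact ⟨⟨by linarith, by linarith⟩, h⟩

lemma band_edge_eq_band_update (j : ℕ) (α : ℝ) :
    P.band c k α (P.edge c k j) =
      P.band (Function.update c k (j + 1)) (k + 1) 0 (P.edge c k j - α) := by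
  rw [band_eq_band_update j, sub_self]

lemma band_edge_succ_eq_band_update {j : ℕ} (hj : j ≠ 0) (β : ℝ) :
    P.band c k (P.edge c k (j + 1)) β = P.band (Function.update c k (j + 1)) (k + 1)
      (P.edge c k j - β) (P.D (Function.update c k (j + 1)) (k + 1)) := by
  rw [band_eq_band_update j, D_update hj]

lemma AdmissibleUpTo.band_subset_union (hadm : P.AdmissibleUpTo c k) {j : ℕ}
    (hj : P.r c k ≤ j) (α β : ℝ) :
    P.band c k α β ⊆ P.band c k α (P.edge c k j) ∪ P.band c k (P.edge c k j) β := by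
  rintro y ⟨⟨h₁, h₂⟩, hy⟩
  rcases lt_trichotomy (P.coord c k y) (P.edge c k j) with h | h | h
  · exact Or.inl ⟨⟨h₁, h⟩, hy⟩
  · exact absurd (hadm.mem_IS_of_coord_eq_edge hj h) hy
  · exact Or.inr ⟨⟨h, h₂⟩, hy⟩

lemma coveredBy_one {S U : Set ℝ} {d : ℝ} (hU : U ∈ P.famAlt) (hSU : S ⊆ U)
    (hd : Metric.ediam U ≤ ENNReal.ofReal d) : P.CoveredBy 1 S d :=
  ⟨fun _ => U, fun _ => hU, fun _ hy => mem_iUnion.2 ⟨0, hSU hy⟩, fun _ => hd⟩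

namespace CoveredBy

variable {m n : ℕ} {S T : Set ℝ} {d d' : ℝ}

lemma mono (h : P.CoveredBy n S d) (hTS : T ⊆ S) (hd : d ≤ d') : P.CoveredBy n T d' :=
  let ⟨U, hU, hSU, hUd⟩ := h
  ⟨U, hU, hTS.trans hSU, fun i => (hUd i).trans (ENNReal.ofReal_le_ofReal hd)⟩

lemma union (hS : P.CoveredBy m S d) (hT : P.CoveredBy n T d) :
    P.CoveredBy (m + n) (S ∪ T) d := by
  obtain ⟨U, hU, hSU, hUd⟩ := hS
  obtain ⟨V, hV, hTV, hVd⟩ := hT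
  refine ⟨Fin.append U V, Fin.addCases (by simpa) (by simpa), ?_,
    Fin.addCases (by simpa) (by simpa)⟩
  rintro y (hy | hy)
  · obtain ⟨i, hi⟩ := mem_iUnion.1 (hSU hy)
    exact mem_iUnion.2 ⟨Fin.castAdd n i, by simpa⟩
  · obtain ⟨i, hi⟩ := mem_iUnion.1 (hTV hy)
    exact mem_iUnion.2 ⟨Fin.natAdd m i, by simpa⟩

lemma mono_card (h : P.CoveredBy m S d) (hm : 0 < m) (hmn : m ≤ n) : P.CoveredBy n S d := by
  obtain ⟨U, hU, hSU, hUd⟩ := h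
  refine ⟨fun i => U ⟨min i (m - 1), by omega⟩, fun _ => hU _, fun y hy => ?_, fun _ => hUd _⟩
  obtain ⟨i, hi⟩ := mem_iUnion.1 (hSU hy)
  exact mem_iUnion.2 ⟨⟨i, by omega⟩, by simpa [show min (i : ℕ) (m - 1) = i by omega]⟩

end CoveredBy

lemma AdmissibleUpTo.exists_mem_altCyl (hadm : P.AdmissibleUpTo c k) {n : ℕ}
    (hn : P.r c k ≤ n) {y : ℝ} (hy : y ∈ P.band c k 0 (P.edge c k n)) :
    ∃ j, n ≤ j ∧ P.coord c k y ≤ P.edge c k j ∧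
      y ∈ P.altCyl (Function.update c k (j + 1)) (k + 1) := by
  obtain ⟨⟨hy₀, hyn⟩, hyIS⟩ := hy
  obtain ⟨j, hnj, hj₁, hj₂⟩ := P.exists_edge_succ_lt_le c k hy₀ hyn.le
  have := P.one_le_r c k
  refine ⟨j, hnj, hj₂, ?_⟩
  rw [altCyl_update (by omega)]
  exact ⟨⟨hj₁, hj₂.lt_of_ne fun h => hyIS (hadm.mem_IS_of_coord_eq_edge (hn.trans hnj) h)⟩, hyIS⟩

lemma altCyl_update_subset {n j : ℕ} (hn : 1 ≤ n) (hnj : n ≤ j) {α : ℝ}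
    (hα : α ≤ P.edge c k (j + 1)) :
    P.altCyl (Function.update c k (j + 1)) (k + 1) ⊆ P.coord c k ⁻¹' Icc α (P.edge c k n) := by
  rw [altCyl_update (by omega)]
  rintro y ⟨⟨h₁, h₂⟩, -⟩
  exact ⟨hα.trans h₁.le, h₂.le.trans (P.edge_antitone c k hn hnj)⟩

lemma AdmissibleUpTo.coveredBy_tail (hadm : P.AdmissibleUpTo c k) {n : ℕ} (hn : P.r c k ≤ n) :
    P.CoveredBy 1 (P.band c k 0 (P.edge c k n)) (P.edge c k n) := by
  have := P.one_le_r c k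
  refine coveredBy_one ⟨c, k, n + 1, hadm, by omega, Or.inr rfl⟩ (fun y hy => ?_) ?_
  · obtain ⟨j, hnj, -, hy⟩ := hadm.exists_mem_altCyl hn hy
    exact mem_biUnion (show j + 1 ∈ {i | n + 1 ≤ i} by simpa) hy
  · rw [← sub_zero (P.edge c k n)]
    refine ediam_le_of_subset_coord_preimage (P := P) (c := c) (k := k) <|
      iUnion₂_subset fun i (hi : n + 1 ≤ i) => ?_
    obtain ⟨j, rfl⟩ : ∃ j, i = j + 1 := ⟨i - 1, by omega⟩
    exact altCyl_update_subset (by omega) (by omega) (P.edge_nonneg c k _)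

lemma AdmissibleUpTo.coveredBy_block (hadm : P.AdmissibleUpTo c k) {n m : ℕ}
    (hn : P.r c k ≤ n) (hnm : n ≤ m) :
    P.CoveredBy 1 (P.band c k (P.edge c k (m + 1)) (P.edge c k n))
      (P.edge c k n - P.edge c k (m + 1)) := by
  have := P.one_le_r c k
  refine coveredBy_one ⟨c, k, n + 1, hadm, by omega, Or.inl ⟨m + 1, by omega, rfl⟩⟩
    (fun y hy => ?_) ?_
  · obtain ⟨j, hnj, hj, hyj⟩ :=
      hadm.exists_mem_altCyl hn (band_mono (P.edge_nonneg c k _) le_rfl hy)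
    have hjm : j ≤ m := by
      by_contra! hmj
      linarith [hy.1.1, P.edge_antitone c k (by omega) hmj]
    exact mem_biUnion (Finset.mem_coe.2 (Finset.mem_Icc.2 ⟨by omega, by omega⟩)) hyj
  · refine ediam_le_of_subset_coord_preimage (P := P) (c := c) (k := k) <|
      iUnion₂_subset fun i hi => ?_
    obtain ⟨hi₁, hi₂⟩ := Finset.mem_Icc.1 hi
    obtain ⟨j, rfl⟩ : ∃ j, i = j + 1 := ⟨i - 1, by omega⟩
    exact altCyl_update_subset (by omega) (by omega) (P.edge_antitone c k (by omega) hi₂)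

theorem AdmissibleUpTo.coveredBy_one_band_zero (hadm : P.AdmissibleUpTo c k) {x : ℝ}
    (hx : 0 < x) (hxD : x ≤ P.D c k) :
    P.CoveredBy 1 (P.band c k 0 x) (x + min x (P.D c k / 2)) := by
  have hr := P.one_le_r c k
  rw [D_eq_edge] at hxD ⊢
  obtain ⟨j, hrj, hj₁, hj₂⟩ := P.exists_edge_succ_lt_le c k hx hxD
  refine (hadm.coveredBy_tail hrj).mono (band_mono le_rfl hj₂) ?_
  have := P.edge_sub_edge_succ_le_edge_succ c k (hr.trans hrj)
  have := P.edge_sub_edge_succ_le_edge_div_two c k hr hrj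
  have : P.edge c k j - x ≤ min x (P.edge c k (P.r c k) / 2) := le_min (by linarith) (by linarith)
  linarith

theorem AdmissibleUpTo.coveredBy_one_band_D (hadm : P.AdmissibleUpTo c k) {x : ℝ} (hx : 0 ≤ x)
    (hxD : x < P.D c k) :
    P.CoveredBy 1 (P.band c k x (P.D c k)) (P.D c k - x + min (P.D c k - x) (P.D c k / 4)) := by
  have hr := P.one_le_r c k
  rw [D_eq_edge] at hxD ⊢
  rcases hx.eq_or_lt with rfl | hx
  · refine (hadm.coveredBy_tail le_rfl).mono subset_rfl ?_
    have := P.edge_nonneg c k (P.r c k)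
    simp only [sub_zero, le_add_iff_nonneg_right, le_min_iff]
    constructor <;> linarith
  obtain ⟨j, hrj, hj₁, hj₂⟩ := P.exists_edge_succ_le_lt c k hx hxD
  rcases hrj.eq_or_lt with rfl | hrj
  · have hchild := (hadm.update le_rfl).coveredBy_one_band_zero (x := P.edge c k (P.r c k) - x)
      (by linarith) (by rw [D_update (by omega)]; linarith)
    rw [D_update (by omega)] at hchild
    rw [band_edge_eq_band_update]
    have := P.edge_sub_edge_succ_le_edge_div_two c k hr le_rfl
    exact hchild.mono subset_rfl (add_le_add_right (min_le_min_left _ (by linarith)) _)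
  · refine (hadm.coveredBy_block le_rfl hrj.le).mono (band_mono hj₁ le_rfl) ?_
    have := P.edge_sub_edge_succ_le_edge_sub c k hr hrj
    have := P.edge_sub_edge_succ_le_edge_div_four c k hr hrj
    have : x - P.edge c k (j + 1) ≤ min (P.edge c k (P.r c k) - x) (P.edge c k (P.r c k) / 4) :=
      le_min (by linarith) (by linarith)
    linarith

theorem AdmissibleUpTo.coveredBy_two_band_zero (hadm : P.AdmissibleUpTo c k) {x : ℝ}
    (hx : 0 < x) (hxD : x ≤ P.D c k) : P.CoveredBy 2 (P.band c k 0 x) x := by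
  have hr := P.one_le_r c k
  rw [D_eq_edge] at hxD
  obtain ⟨j, hrj, hj₁, hj₂⟩ := P.exists_edge_succ_lt_le c k hx hxD
  have htail := (hadm.coveredBy_tail (n := j + 1) (by omega)).mono subset_rfl hj₁.le
  have hchild := (hadm.update (i := j + 1) (by omega)).coveredBy_one_band_D
    (x := P.edge c k j - x) (by linarith) (by rw [D_update (by omega)]; linarith)
  rw [← band_edge_succ_eq_band_update (by omega), D_update (by omega)] at hchild
  refine (htail.union (hchild.mono subset_rfl ?_)).mono
    (hadm.band_subset_union (by omega) 0 x) le_rfl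
  have := P.edge_sub_edge_succ_le_edge_succ c k (hr.trans hrj)
  refine (add_le_add_right (min_le_right (α := ℝ) _ _) _).trans ?_
  linarith

theorem AdmissibleUpTo.coveredBy_two_band_D (hadm : P.AdmissibleUpTo c k) {x : ℝ} (hx : 0 ≤ x)
    (hxD : x < P.D c k) : P.CoveredBy 2 (P.band c k x (P.D c k)) (P.D c k - x) := by
  have hr := P.one_le_r c k
  rcases hx.eq_or_lt with rfl | hx
  · simpa using hadm.coveredBy_two_band_zero hadm.D_pos le_rfl
  rw [D_eq_edge] at hxD ⊢
  obtain ⟨j, hrj, hj₁, hj₂⟩ := P.exists_edge_succ_le_lt c k hx hxD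
  rcases hrj.eq_or_lt with rfl | hrj
  · rw [band_edge_eq_band_update]
    exact (hadm.update le_rfl).coveredBy_two_band_zero (by linarith)
      (by rw [D_update (by omega)]; linarith)
  obtain ⟨j, rfl⟩ : ∃ i, j = i + 1 := ⟨j - 1, by omega⟩
  have hblock := (hadm.coveredBy_block le_rfl (Nat.lt_succ_iff.1 hrj)).mono subset_rfl
    (sub_le_sub_left hj₂.le _)
  have hchild := (hadm.update (i := j + 2) (by omega)).coveredBy_one_band_zero
    (x := P.edge c k (j + 1) - x) (by linarith) (by rw [D_update (by omega)]; linarith)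
  rw [← band_edge_eq_band_update, D_update (by omega)] at hchild
  refine ((hchild.mono subset_rfl ?_).union hblock).mono
    (hadm.band_subset_union (j := j + 1) (by omega) _ _) le_rfl
  have := P.edge_sub_edge_succ_le_edge_sub c k hr hrj
  refine (add_le_add_right (min_le_right (α := ℝ) _ _) _).trans ?_
  linarith

theorem AdmissibleUpTo.coveredBy_three_of_edge_mem (hadm : P.AdmissibleUpTo c k) {j : ℕ}
    (hrj : P.r c k ≤ j) {a b : ℝ} (ha : P.edge c k (j + 2) ≤ a) (ha' : a < P.edge c k (j + 1))
    (hb : P.edge c k (j + 1) < b) (hb' : b ≤ P.edge c k j) :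
    P.CoveredBy 3 (P.band c k a b) (b - a) := by
  have hr := P.one_le_r c k
  have hadmL := hadm.update (i := j + 2) (by omega)
  have hadmR := hadm.update (i := j + 1) (by omega)
  have hDL : P.D (Function.update c k (j + 2)) (k + 1) =
      P.edge c k (j + 1) - P.edge c k (j + 2) := D_update (by omega)
  have hDR : P.D (Function.update c k (j + 1)) (k + 1) =
      P.edge c k j - P.edge c k (j + 1) := D_update (by omega)
  have hsplit := hadm.band_subset_union (j := j + 1) (by omega) a b
  rw [band_edge_eq_band_update (j + 1), band_edge_succ_eq_band_update (j := j) (by omega)]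
    at hsplit
  rcases le_total (P.edge c k (j + 1) - a) (b - P.edge c k (j + 1)) with h | h
  · have hL := hadmL.coveredBy_one_band_zero (x := P.edge c k (j + 1) - a) (by linarith)
      (by linarith)
    have hR := hadmR.coveredBy_two_band_D (x := P.edge c k j - b) (by linarith) (by linarith)
    refine ((hL.mono subset_rfl ?_).union (hR.mono subset_rfl ?_)).mono hsplit le_rfl
    · exact (add_le_add_right (min_le_left _ _) _).trans (by linarith)
    · linarith
  · have hL := hadmL.coveredBy_two_band_zero (x := P.edge c k (j + 1) - a) (by linarith)
      (by linarith)
    have hR := hadmR.coveredBy_one_band_D (x := P.edge c k j - b) (by linarith) (by linarith)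
    refine ((hL.mono subset_rfl ?_).union (hR.mono subset_rfl ?_)).mono hsplit le_rfl
    · linarith
    · exact (add_le_add_right (min_le_left _ _) _).trans (by linarith)

theorem AdmissibleUpTo.coveredBy_three_of_edges_mem (hadm : P.AdmissibleUpTo c k) {j m : ℕ}
    (hrj : P.r c k ≤ j) (hjm : j < m) {a b : ℝ} (ha : P.edge c k (m + 2) ≤ a)
    (ha' : a < P.edge c k (m + 1)) (hb : P.edge c k (j + 1) < b) (hb' : b ≤ P.edge c k j) :
    P.CoveredBy 3 (P.band c k a b) (b - a) := by
  have hr := P.one_le_r c k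
  have hDL : P.D (Function.update c k (m + 2)) (k + 1) =
      P.edge c k (m + 1) - P.edge c k (m + 2) := D_update (by omega)
  have hDR : P.D (Function.update c k (j + 1)) (k + 1) =
      P.edge c k j - P.edge c k (j + 1) := D_update (by omega)
  have hsplit := (hadm.band_subset_union (j := m + 1) (by omega) a b).trans
    (union_subset_union_right _ (hadm.band_subset_union (j := j + 1) (by omega) _ b))
  rw [band_edge_eq_band_update (m + 1), band_edge_succ_eq_band_update (j := j) (by omega)]
    at hsplit
  have hL := (hadm.update (i := m + 2) (by omega)).coveredBy_one_band_zero
    (x := P.edge c k (m + 1) - a) (by linarith) (by linarith)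
  have hM := hadm.coveredBy_block (n := j + 1) (by omega) hjm
  have hR := (hadm.update (i := j + 1) (by omega)).coveredBy_one_band_D
    (x := P.edge c k j - b) (by linarith) (by linarith)
  refine ((hL.mono subset_rfl ?_).union ((hM.mono subset_rfl ?_).union
    (hR.mono subset_rfl ?_))).mono hsplit le_rfl
  · have := P.edge_sub_edge_succ_le_edge_sub c k (i := j + 1) (by omega) (by omega : j + 1 < m + 1)
    exact (add_le_add_right (min_le_right _ _) _).trans (by linarith)
  · linarith
  · have := P.edge_sub_edge_succ_le_four_mul c k (hr.trans hrj)
    have := P.edge_antitone c k (i := j + 2) (j := m + 1) (by omega) (by omega)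
    exact (add_le_add_right (min_le_right _ _) _).trans (by linarith)

theorem AdmissibleUpTo.coveredBy_three_band (hadm : P.AdmissibleUpTo c k) {a b : ℝ}
    (ha : 0 ≤ a) (hab : a < b) (hbD : b ≤ P.D c k) :
    P.CoveredBy 3 (P.band c k a b) (b - a) := by
  -- each descent into a child at least halves `D`, so the number of steps is bounded
  obtain ⟨F, hF⟩ := pow_unbounded_of_one_lt (P.D c k / (b - a)) one_lt_two
  induction F generalizing c k a b with
  | zero =>
    rw [pow_zero, div_lt_one (by linarith)] at hF
    linarith
  | succ F ih =>
    rcases ha.eq_or_lt with rfl | ha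
    · simpa using (hadm.coveredBy_two_band_zero hab hbD).mono_card two_pos (by norm_num)
    have hr := P.one_le_r c k
    obtain ⟨j, hrj, hj₁, hj₂⟩ :=
      P.exists_edge_succ_lt_le c k (ha.trans hab) (hbD.trans_eq (P.D_eq_edge c k))
    rcases le_or_gt (P.edge c k (j + 1)) a with hja | hja
    · have hDj := D_update (P := P) (c := c) (k := k) (j := j) (by omega)
      have := P.edge_sub_edge_succ_le_edge_div_two c k hr hrj
      rw [← D_eq_edge] at this
      rw [band_eq_band_update j]
      refine (ih (hadm.update (by omega)) (by linarith) (by linarith) (by linarith) ?_).mono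
        subset_rfl (by linarith)
      rw [div_lt_iff₀ (by linarith), pow_succ] at hF
      rw [div_lt_iff₀ (by linarith), sub_sub_sub_cancel_left, hDj]
      linarith
    · obtain ⟨m, hjm, hm₁, hm₂⟩ := P.exists_edge_succ_le_lt c k ha hja
      obtain ⟨m, rfl⟩ : ∃ i, m = i + 1 := ⟨m - 1, by omega⟩
      rcases (Nat.lt_succ_iff.1 hjm).eq_or_lt with rfl | hjm
      · exact hadm.coveredBy_three_of_edge_mem hrj hm₁ hm₂ hj₁ hj₂
      · exact hadm.coveredBy_three_of_edges_mem hrj hjm hm₁ hm₂ hj₁ hj₂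

lemma admissibleUpTo_zero (c : ℕ → ℕ) : P.AdmissibleUpTo c 0 :=
  fun _ h => absurd h (Nat.not_lt_zero _)

lemma D_zero (c : ℕ → ℕ) : P.D c 0 = 1 := by simp [D, rprod, qprod]

lemma band_zero (c : ℕ → ℕ) (α β : ℝ) : P.band c 0 α β = Ioo α β \ P.IS := by
  ext y
  simp [band, coord, A]

end PerronSystem

/-- Every set `U = (x₁,x₂) \ IS^{P⁻}` with `0 ≤ x₁ < x₂ ≤ 1` can be covered by
at most three sets from `𝔓⁻`, each of diameter at most `x₂ − x₁`. -/
theorem cover_by_three_famAlt (P : PerronSystem) (x₁ x₂ : ℝ)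
    (h₀ : 0 ≤ x₁) (h₁₂ : x₁ < x₂) (h₁ : x₂ ≤ 1) :
    ∃ U₁ U₂ U₃ : Set ℝ, U₁ ∈ P.famAlt ∧ U₂ ∈ P.famAlt ∧ U₃ ∈ P.famAlt ∧
      Set.Ioo x₁ x₂ \ P.IS ⊆ U₁ ∪ U₂ ∪ U₃ ∧
      EMetric.diam U₁ ≤ ENNReal.ofReal (x₂ - x₁) ∧
      EMetric.diam U₂ ≤ ENNReal.ofReal (x₂ - x₁) ∧
      EMetric.diam U₃ ≤ ENNReal.ofReal (x₂ - x₁) := by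
  obtain ⟨U, hU, hcover, hdiam⟩ := (P.admissibleUpTo_zero id).coveredBy_three_band h₀ h₁₂
    (h₁.trans_eq (P.D_zero id).symm)
  rw [PerronSystem.band_zero] at hcover
  refine ⟨U 0, U 1, U 2, hU 0, hU 1, hU 2, fun y hy => ?_, hdiam 0, hdiam 1, hdiam 2⟩
  obtain ⟨i, hi⟩ := mem_iUnion.1 (hcover hy)
  fin_cases i <;> simp_all
end

section
/- Let P be a Perron system, let (c₁,…,c_k) be a P-admissible word, let n ≥ r_k + 1, and let M = ⋃_{i=n}^{∞} Δ^P_{c₁…c_k i} be the corresponding countable union in 𝔓. Then for every ε > 0 and every α > 0 there exists a strictly increasing sequence of integers (t_j)_{j≥1} with t₁ = n such that, setting M_j = ⋃_{i=t_j}^{t_{j+1}−1} Δ^P_{c₁…c_k i} (a finite union of consecutive cylinders), one has M = ⋃_{j=1}^{∞} M_j and ∑_{j=1}^{∞} |M_j|^α < |M|^α · (1 + ε). -/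
open Set Filter MeasureTheory
open scoped ENNReal

/-!
The cylinder `Δ_{c₁…c_k i}` is the interval `(S_k + D_k r_k / i, S_k + D_k r_k / (i - 1)]`, so the
cylinders with `i ≥ m` tile `(S_k, S_k + D_k r_k / (m - 1)]`, an interval of length inversely
proportional to `m - 1`. Cutting at `t_j = (n - 1) N ^ j + 1` puts each block `M_j` inside a tail of
diameter `|M| / N ^ j`, so `∑ |M_j| ^ α ≤ |M| ^ α / (1 - N ^ (-α))`, which is below
`|M| ^ α (1 + ε)` once `N` is large.
-/

open Topology

lemma biUnion_Ioc_add_div_eq {s a : ℝ} (ha : 0 < a) {n : ℕ} (hn : 2 ≤ n) :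
    ⋃ i ∈ {j : ℕ | n ≤ j}, Ioc (s + a / i) (s + a / ((i : ℝ) - 1)) =
      Ioc s (s + a / ((n : ℝ) - 1)) := by
  have hn1 : (1 : ℝ) < n := by exact_mod_cast hn
  ext x
  simp only [mem_iUnion₂, mem_ofPred_eq, mem_Ioc]
  constructor
  · rintro ⟨i, hni, hx₁, hx₂⟩
    have hni' : (n : ℝ) ≤ i := by exact_mod_cast hni
    refine ⟨by linarith [div_pos ha (by linarith : (0 : ℝ) < i)], hx₂.trans ?_⟩
    gcongr
  · rintro ⟨hx₁, hx₂⟩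
    have hy : 0 < x - s := by linarith
    -- `x` lies in the piece of index `⌊a / (x - s)⌋₊ + 1`
    set m := ⌊a / (x - s)⌋₊
    have hm_le : (m : ℝ) ≤ a / (x - s) := Nat.floor_le (by positivity)
    have hm_lt : a / (x - s) < m + 1 := Nat.lt_floor_add_one _
    have hn_le : (n : ℝ) - 1 ≤ a / (x - s) := by
      rw [le_div_iff₀ hy, mul_comm, ← le_div_iff₀ (by linarith)]
      linarith
    have hnm : n ≤ m + 1 := by
      have : (n : ℝ) < m + 2 := by linarith
      have : n < m + 2 := by exact_mod_cast this
      omega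
    have hm : (0 : ℝ) < m := by exact_mod_cast (by omega : 0 < m)
    refine ⟨m + 1, hnm, ?_, ?_⟩
    · have : a / (m + 1 : ℕ) < x - s := by
        rw [div_lt_iff₀ (by positivity)]
        push_cast
        rwa [div_lt_iff₀ hy, mul_comm] at hm_lt
      linarith
    · have : x - s ≤ a / m := by
        rw [le_div_iff₀ hm, mul_comm]
        rwa [le_div_iff₀ hy] at hm_le
      push_cast
      rw [add_sub_cancel_right]
      linarith

lemma strictMono_mul_pow_add_one {a N : ℕ} (ha : 0 < a) (hN : 1 < N) :
    StrictMono fun j => a * N ^ j + 1 := fun _ _ h => by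
  dsimp only
  gcongr

lemma biUnion_setOf_le_eq_iUnion_biUnion_Ico {α : Type*} (F : ℕ → Set α) {t : ℕ → ℕ}
    (ht : StrictMono t) :
    ⋃ i ∈ {j : ℕ | t 0 ≤ j}, F i = ⋃ j, ⋃ i ∈ Finset.Ico (t j) (t (j + 1)), F i := by
  ext x
  simp only [mem_iUnion, mem_ofPred_eq, Finset.mem_Ico]
  constructor
  · rintro ⟨i, hi, hx⟩
    obtain ⟨j, hj, hj'⟩ := ht.exists_between_of_tendsto_atTop ht.tendsto_atTop
      (x := i + 1) (by omega)
    exact ⟨j, i, ⟨by omega, by omega⟩, hx⟩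
  · rintro ⟨j, i, ⟨hi, -⟩, hx⟩
    exact ⟨i, (ht.monotone (Nat.zero_le j)).trans hi, hx⟩

namespace ENNReal

lemma tendsto_tsum_inv_pow_rpow {α : ℝ} (hα : 0 < α) :
    Tendsto (fun N : ℕ => ∑' j : ℕ, (((N : ℝ≥0∞) ^ j)⁻¹) ^ α) atTop (𝓝 1) := by
  have hgeom (N : ℕ) : ∑' j : ℕ, (((N : ℝ≥0∞) ^ j)⁻¹) ^ α = (1 - ((N : ℝ≥0∞) ^ α)⁻¹)⁻¹ := by
    rw [← tsum_geometric]
    refine tsum_congr fun j => ?_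
    rw [inv_rpow, ← rpow_natCast_mul, mul_comm, rpow_mul_natCast, ENNReal.inv_pow]
  have hpow : Tendsto (fun N : ℕ => ((N : ℝ≥0∞) ^ α)⁻¹) atTop (𝓝 0) := by
    have := ((continuous_rpow_const (y := α)).tendsto ∞).comp tendsto_nat_nhds_top
    rw [top_rpow_of_pos hα] at this
    simpa using this.inv
  simp_rw [hgeom]
  simpa using (((continuous_sub_left one_ne_top).tendsto 0).comp hpow).inv

lemma tsum_rpow_lt_mul_of_le_mul {d r : ℕ → ℝ≥0∞} {X C : ℝ≥0∞} {α : ℝ} (hα : 0 ≤ α)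
    (hX₀ : X ≠ 0) (hX : X ≠ ∞) (hd : ∀ j, d j ≤ X * r j) (hr : ∑' j, r j ^ α < C) :
    ∑' j, d j ^ α < X ^ α * C :=
  calc ∑' j, d j ^ α ≤ ∑' j, (X * r j) ^ α := ENNReal.tsum_le_tsum fun j => rpow_le_rpow (hd j) hα
    _ = X ^ α * ∑' j, r j ^ α := by simp_rw [mul_rpow_of_nonneg _ _ hα, ENNReal.tsum_mul_left]
    _ < X ^ α * C :=
      (ENNReal.mul_lt_mul_iff_right (rpow_pos (pos_iff_ne_zero.mpr hX₀) hX).ne'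
        (rpow_ne_top_of_nonneg hα hX)).mpr hr

end ENNReal

namespace PerronSystem

variable (P : PerronSystem) (c : ℕ → ℕ) {k : ℕ}

lemma two_le_of_r_add_one_le {m n : ℕ} (h : P.r c m + 1 ≤ n) : 2 ≤ n := by
  have := P.φ_pos (List.ofFn fun j : Fin m => c j)
  unfold r at h
  omega

lemma two_le_of_admissibleUpTo (hadm : P.AdmissibleUpTo c k) {j : ℕ} (hj : j < k) : 2 ≤ c j :=
  P.two_le_of_r_add_one_le c (hadm j hj)

lemma rprod_pos (m : ℕ) : 0 < P.rprod c m :=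
  Finset.prod_pos fun j _ => by exact_mod_cast P.φ_pos _

lemma qprod_pos {m : ℕ} (hc : ∀ j < m, 2 ≤ c j) : 0 < qprod c m :=
  Finset.prod_pos fun j hj => by
    have : (2 : ℝ) ≤ c j := by exact_mod_cast hc j (Finset.mem_range.mp hj)
    nlinarith

variable (i : ℕ) {m : ℕ}

lemma r_update_of_le (hm : m ≤ k) : P.r (Function.update c k i) m = P.r c m := by
  unfold r
  congr 1
  exact List.ofFn_inj.mpr <| funext fun j => Function.update_of_ne (by omega) i c

lemma rprod_update_of_le (hm : m ≤ k + 1) :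
    P.rprod (Function.update c k i) m = P.rprod c m :=
  Finset.prod_congr rfl fun j hj => by
    rw [P.r_update_of_le c i (by have := Finset.mem_range.mp hj; omega)]

lemma qprod_update_of_le (hm : m ≤ k) : qprod (Function.update c k i) m = qprod c m :=
  Finset.prod_congr rfl fun j hj => by
    rw [Function.update_of_ne (by have := Finset.mem_range.mp hj; omega)]

lemma S_update_succ :
    P.S (Function.update c k i) (k + 1) = P.S c k + P.rprod c (k + 1) / (qprod c k * i) := by
  rw [S, Finset.sum_range_succ, P.rprod_update_of_le c i le_rfl, qprod_update_of_le c i le_rfl,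
    Function.update_self, S]
  congr 1
  refine Finset.sum_congr rfl fun m hm => ?_
  have := Finset.mem_range.mp hm
  rw [P.rprod_update_of_le c i (by omega), qprod_update_of_le c i (by omega),
    Function.update_of_ne (by omega)]

lemma D_update_succ :
    P.D (Function.update c k i) (k + 1) =
      P.rprod c (k + 1) / (qprod c k * (((i : ℝ) - 1) * i)) := by
  rw [D, qprod, Finset.prod_range_succ, ← qprod, qprod_update_of_le c i le_rfl,
    P.rprod_update_of_le c i le_rfl, Function.update_self]

lemma rprod_succ_div_qprod : P.rprod c (k + 1) / qprod c k = P.D c k * P.r c k := by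
  rw [D, rprod, Finset.prod_range_succ, ← rprod, mul_div_right_comm]

lemma cyl_update_succ (hi : 2 ≤ i) :
    P.cyl (Function.update c k i) (k + 1) =
      Ioc (P.S c k + P.D c k * P.r c k / i) (P.S c k + P.D c k * P.r c k / ((i : ℝ) - 1)) := by
  have hi : (2 : ℝ) ≤ i := by exact_mod_cast hi
  have hi₀ : (i : ℝ) ≠ 0 := by linarith
  have hi₁ : (i : ℝ) - 1 ≠ 0 := by linarith
  rw [cyl, S_update_succ, D_update_succ, ← div_div, ← div_div, rprod_succ_div_qprod, add_assoc]
  generalize P.D c k * P.r c k = a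
  congr 2
  field_simp
  ring

variable {P c}

lemma D_mul_r_pos (hadm : P.AdmissibleUpTo c k) : 0 < P.D c k * P.r c k :=
  mul_pos (div_pos (P.rprod_pos c k) (qprod_pos c fun _ => P.two_le_of_admissibleUpTo c hadm))
    (by exact_mod_cast P.φ_pos _)

lemma biUnion_cyl_update_succ (hadm : P.AdmissibleUpTo c k) {n : ℕ} (hn : P.r c k + 1 ≤ n) :
    ⋃ i ∈ {j : ℕ | n ≤ j}, P.cyl (Function.update c k i) (k + 1) =
      Ioc (P.S c k) (P.S c k + P.D c k * P.r c k / ((n : ℝ) - 1)) := by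
  have hn₂ := P.two_le_of_r_add_one_le c hn
  rw [← biUnion_Ioc_add_div_eq (P.D_mul_r_pos hadm) hn₂]
  exact iUnion₂_congr fun i hi => P.cyl_update_succ c i (hn₂.trans hi)

lemma ediam_biUnion_cyl_update_succ (hadm : P.AdmissibleUpTo c k) {n : ℕ}
    (hn : P.r c k + 1 ≤ n) :
    Metric.ediam (⋃ i ∈ {j : ℕ | n ≤ j}, P.cyl (Function.update c k i) (k + 1)) =
      ENNReal.ofReal (P.D c k * P.r c k / ((n : ℝ) - 1)) := by
  rw [biUnion_cyl_update_succ hadm hn, Real.ediam_Ioc, add_sub_cancel_left]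

lemma ediam_biUnion_cyl_update_succ_pos (hadm : P.AdmissibleUpTo c k) {n : ℕ}
    (hn : P.r c k + 1 ≤ n) :
    0 < Metric.ediam (⋃ i ∈ {j : ℕ | n ≤ j}, P.cyl (Function.update c k i) (k + 1)) := by
  rw [ediam_biUnion_cyl_update_succ hadm hn, ENNReal.ofReal_pos]
  exact div_pos (P.D_mul_r_pos hadm)
    (sub_pos.mpr (Nat.one_lt_cast.mpr (P.two_le_of_r_add_one_le c hn)))

lemma ediam_biUnion_cyl_update_succ_mul_pow (hadm : P.AdmissibleUpTo c k) {n : ℕ}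
    (hn : P.r c k + 1 ≤ n) {N : ℕ} (hN : 0 < N) (j : ℕ) :
    Metric.ediam (⋃ i ∈ {i : ℕ | (n - 1) * N ^ j + 1 ≤ i},
        P.cyl (Function.update c k i) (k + 1)) =
      Metric.ediam (⋃ i ∈ {i : ℕ | n ≤ i}, P.cyl (Function.update c k i) (k + 1)) *
        ((N : ℝ≥0∞) ^ j)⁻¹ := by
  have hn₂ := P.two_le_of_r_add_one_le c hn
  have hnj : P.r c k + 1 ≤ (n - 1) * N ^ j + 1 :=
    hn.trans (by have := Nat.mul_le_mul_left (n - 1) (Nat.one_le_pow j N hN); omega)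
  have hcast : (((n - 1) * N ^ j + 1 : ℕ) : ℝ) - 1 = ((n : ℝ) - 1) * (N : ℝ) ^ j := by
    push_cast [Nat.cast_sub (by omega : 1 ≤ n)]
    ring
  rw [ediam_biUnion_cyl_update_succ hadm hnj, ediam_biUnion_cyl_update_succ hadm hn, hcast,
    ← div_div, ENNReal.ofReal_div_of_pos (pow_pos (Nat.cast_pos.mpr hN) j),
    ENNReal.ofReal_pow (Nat.cast_nonneg N), ENNReal.ofReal_natCast, div_eq_mul_inv]

end PerronSystem

/-- Every countable union `M = ⋃_{i=n}^{∞} Δ^P_{c₁…c_k i} ∈ 𝔓` can be split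
into finite unions `M_j = ⋃_{i=t_j}^{t_{j+1}−1} Δ^P_{c₁…c_k i}` of consecutive cylinders with
`∑_j |M_j|^α < |M|^α (1 + ε)`. -/
theorem countable_union_split (P : PerronSystem) (c : ℕ → ℕ) (k : ℕ)
    (hadm : P.AdmissibleUpTo c k) (n : ℕ) (hn : P.r c k + 1 ≤ n)
    (ε α : ℝ) (hε : 0 < ε) (hα : 0 < α) :
    ∃ t : ℕ → ℕ, t 0 = n ∧ StrictMono t ∧
      (⋃ i ∈ {j : ℕ | n ≤ j}, P.cyl (Function.update c k i) (k + 1)) =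
        (⋃ j : ℕ, ⋃ i ∈ Finset.Ico (t j) (t (j + 1)), P.cyl (Function.update c k i) (k + 1)) ∧
      ∑' j : ℕ,
          (EMetric.diam (⋃ i ∈ Finset.Ico (t j) (t (j + 1)),
            P.cyl (Function.update c k i) (k + 1))) ^ α <
        (EMetric.diam (⋃ i ∈ {j : ℕ | n ≤ j},
            P.cyl (Function.update c k i) (k + 1))) ^ α * ENNReal.ofReal (1 + ε) := by
  obtain ⟨N, hN, hN₂⟩ : ∃ N : ℕ,
      ∑' j : ℕ, (((N : ℝ≥0∞) ^ j)⁻¹) ^ α < ENNReal.ofReal (1 + ε) ∧ 2 ≤ N :=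
    (((ENNReal.tendsto_tsum_inv_pow_rpow hα).eventually
      (gt_mem_nhds (ENNReal.one_lt_ofReal.mpr (by linarith)))).and (eventually_ge_atTop 2)).exists
  have hn₂ := P.two_le_of_r_add_one_le c hn
  set t : ℕ → ℕ := fun j => (n - 1) * N ^ j + 1 with ht_def
  have ht : StrictMono t := strictMono_mul_pow_add_one (by omega) (by omega)
  have ht₀ : t 0 = n := by simp only [ht_def, pow_zero, mul_one]; omega
  refine ⟨t, ht₀, ht, ?_, ?_⟩
  · rw [← ht₀]
    exact biUnion_setOf_le_eq_iUnion_biUnion_Ico _ ht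
  · refine ENNReal.tsum_rpow_lt_mul_of_le_mul hα.le
      (PerronSystem.ediam_biUnion_cyl_update_succ_pos hadm hn).ne'
      ((PerronSystem.ediam_biUnion_cyl_update_succ hadm hn).trans_ne ENNReal.ofReal_ne_top)
      (fun j => ?_) hN
    calc _ ≤ Metric.ediam (⋃ i ∈ {i : ℕ | t j ≤ i}, P.cyl (Function.update c k i) (k + 1)) :=
          Metric.ediam_mono <| biUnion_subset_biUnion_left fun i hi => (Finset.mem_Ico.mp hi).1
      _ = _ := PerronSystem.ediam_biUnion_cyl_update_succ_mul_pow hadm hn (by omega) j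
end
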